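/- arXiv:1405.7871 — 9 statements merged into one kernel-verified Lean document; each statement's English description precedes it below -/
import Mathlib

section
/- Let R = ℂ[x_1,…,x_n], let I ⊆ R be an ideal and let g ∈ R. Then the Macaulay dual space of the colon ideal I : ⟨g⟩ at the origin equals the contraction of the dual space of I by g; that is, D_0[I : ⟨g⟩] = { g∘p : p ∈ D_0[I] } as ℂ-subspaces of R. -/
open MvPolynomial

noncomputable section

/-- Apolarity pairing `⟨q, f⟩ = ∑ α (coeff α q) * (coeff α f)`. -/
def apair {n : ℕ} (q f : MvPolynomial (Fin n) ℂ) : ℂ :=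
  ∑ α ∈ q.support, q.coeff α * f.coeff α

lemma apair_eq_sum {n : ℕ} {q : MvPolynomial (Fin n) ℂ} {s : Finset (Fin n →₀ ℕ)}
    (h : q.support ⊆ s) (f : MvPolynomial (Fin n) ℂ) :
    apair q f = ∑ α ∈ s, q.coeff α * f.coeff α :=
  Finset.sum_subset h (fun α _ hα => by
    rw [MvPolynomial.notMem_support_iff.mp hα, zero_mul])

/-- The Macaulay dual space `D_0[I]` of an ideal at the origin. -/
def dualSpace {n : ℕ} (I : Ideal (MvPolynomial (Fin n) ℂ)) :
    Submodule ℂ (MvPolynomial (Fin n) ℂ) where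
  carrier := {q | ∀ f ∈ I, apair q f = 0}
  zero_mem' := by intro f hf; simp [apair]
  add_mem' := by
    intro a b ha hb f hf
    have h : apair (a + b) f = apair a f + apair b f := by
      rw [apair_eq_sum (s := a.support ∪ b.support) MvPolynomial.support_add,
        apair_eq_sum (s := a.support ∪ b.support) Finset.subset_union_left,
        apair_eq_sum (s := a.support ∪ b.support) Finset.subset_union_right,
        ← Finset.sum_add_distrib]
      exact Finset.sum_congr rfl fun α _ => by rw [coeff_add, add_mul]
    rw [h, ha f hf, hb f hf, add_zero]
  smul_mem' := by
    intro c q hq f hf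
    have h : apair (c • q) f = c * apair q f := by
      rw [apair_eq_sum (s := q.support) MvPolynomial.support_smul, apair, Finset.mul_sum]
      exact Finset.sum_congr rfl fun α _ => by rw [coeff_smul, smul_eq_mul, mul_assoc]
    rw [h, hq f hf, mul_zero]

open scoped Classical in
/-- The contraction `g ∘ q`, realizing the action of `g` on differential functionals:
`coeff α (contract g q) = ∑ β, coeff β g * coeff (α + β) q`. -/
def contract {n : ℕ} (g q : MvPolynomial (Fin n) ℂ) : MvPolynomial (Fin n) ℂ :=
  ∑ β ∈ g.support, ∑ α ∈ q.support,
    if β ≤ α then monomial (α - β) (g.coeff β * q.coeff α) else 0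

/-- The truncated dual space `D_0^k[I]`. -/
def truncDual {n : ℕ} (k : ℕ) (I : Ideal (MvPolynomial (Fin n) ℂ)) :
    Submodule ℂ (MvPolynomial (Fin n) ℂ) where
  carrier := {q | q ∈ dualSpace I ∧ q.totalDegree ≤ k}
  zero_mem' := ⟨(dualSpace I).zero_mem, by simp⟩
  add_mem' := fun ha hb => ⟨(dualSpace I).add_mem ha.1 hb.1,
    le_trans (MvPolynomial.totalDegree_add _ _) (max_le ha.2 hb.2)⟩
  smul_mem' := fun c q hq => ⟨(dualSpace I).smul_mem c hq.1,
    le_trans (MvPolynomial.totalDegree_smul_le c q) hq.2⟩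

/-! Let `𝔪` be the ideal of the origin. A polynomial of degree `< k` pairs to zero with `𝔪 ^ k`,
and conversely every linear functional vanishing on `𝔪 ^ k` is the pairing with a polynomial.
Given `q ⊥ I : g`, the Artin–Rees lemma yields `(I + 𝔪 ^ (k + c)) : g ⊆ (I : g) + 𝔪 ^ k`, so `q`
also annihilates `J : g` for `J = I + 𝔪 ^ K` with `K` large. Thus `f ↦ ⟨q, f⟩` vanishes on the
kernel of `f ↦ g f mod J` and factors as `f ↦ ψ (g f)` with `ψ` vanishing on `J`. As `ψ` kills
`𝔪 ^ K`, it is the pairing with a polynomial `p ∈ D_0[I]`, and `g ∘ p = q` by adjointness. -/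
theorem Ideal.exists_colon_sup_pow_le {R : Type*} [CommRing R] [IsNoetherianRing R]
    (I 𝔞 : Ideal R) (g : R) :
    ∃ c, ∀ k, (I ⊔ 𝔞 ^ (k + c)).colon (span {g}) ≤ I.colon (span {g}) ⊔ 𝔞 ^ k := by
  obtain ⟨c, hc⟩ := 𝔞.exists_pow_inf_eq_pow_smul (M := R) (I ⊔ span {g})
  refine ⟨c, fun k f hf => ?_⟩
  obtain ⟨a, ha, b, hb, hab⟩ := Submodule.mem_sup.1 (mem_colon_span_singleton.1 hf)
  have hbk : b ∈ I ⊔ span {g} * 𝔞 ^ k := by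
    have hbN : b ∈ 𝔞 ^ (k + c) • ⊤ ⊓ (I ⊔ span {g}) := by
      refine ⟨by simpa using hb, ?_⟩
      rw [eq_sub_of_add_eq' hab]
      exact sub_mem (mem_sup_right (mul_mem_left _ _ (mem_span_singleton_self g)))
        (mem_sup_left ha)
    rw [hc _ (Nat.le_add_left c k), add_tsub_cancel_right] at hbN
    have hle : 𝔞 ^ k • (𝔞 ^ c • ⊤ ⊓ (I ⊔ span {g})) ≤ I ⊔ span {g} * 𝔞 ^ k :=
      calc _ ≤ 𝔞 ^ k * (I ⊔ span {g}) := Submodule.smul_mono le_rfl inf_le_right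
        _ = 𝔞 ^ k * I ⊔ span {g} * 𝔞 ^ k := by rw [mul_sup, mul_comm (𝔞 ^ k) (span {g})]
        _ ≤ _ := sup_le_sup_right mul_le_right _
    exact hle hbN
  obtain ⟨a', ha', z, hz, rfl⟩ := Submodule.mem_sup.1 hbk
  obtain ⟨h, hh, rfl⟩ := mem_span_singleton_mul.1 hz
  have hfh : (f - h) * g = a + a' := by rw [sub_mul, ← hab]; ring
  rw [show f = (f - h) + h by ring]
  exact Submodule.add_mem_sup (mem_colon_span_singleton.2 (hfh ▸ add_mem ha ha')) hh

theorem Module.Dual.exists_comp_eq_of_comap_le_ker {K V W : Type*} [Field K]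
    [AddCommGroup V] [Module K V] [AddCommGroup W] [Module K W]
    (φ : V →ₗ[K] W) (J : Submodule K W) (ℓ : Module.Dual K V)
    (h : J.comap φ ≤ LinearMap.ker ℓ) :
    ∃ ψ : Module.Dual K W, J ≤ LinearMap.ker ψ ∧ ψ ∘ₗ φ = ℓ := by
  have hℓ : ℓ ∈ (LinearMap.ker (J.mkQ ∘ₗ φ)).dualAnnihilator := by
    rw [Submodule.mem_dualAnnihilator]
    intro v hv
    exact h (by simpa using hv)
  rw [← LinearMap.range_dualMap_eq_dualAnnihilator_ker] at hℓ
  obtain ⟨χ, rfl⟩ := hℓ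
  exact ⟨χ ∘ₗ J.mkQ, fun w hw => by simp [(Submodule.Quotient.mk_eq_zero J).2 hw], rfl⟩

namespace Apolarity

variable {n : ℕ}

theorem apair_comm (q f : MvPolynomial (Fin n) ℂ) : apair q f = apair f q := by
  rw [apair_eq_sum (Finset.subset_union_left (s₂ := f.support)),
    apair_eq_sum (Finset.subset_union_right (s₁ := q.support))]
  exact Finset.sum_congr rfl fun _ _ => mul_comm _ _

def apairₗ (q : MvPolynomial (Fin n) ℂ) : Module.Dual ℂ (MvPolynomial (Fin n) ℂ) where
  toFun := apair q
  map_add' f f' := by simp [apair, mul_add, Finset.sum_add_distrib]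
  map_smul' c f := by simp [apair, Finset.mul_sum, mul_left_comm]

@[simp]
theorem apairₗ_apply (q f : MvPolynomial (Fin n) ℂ) : apairₗ q f = apair q f := rfl

theorem apair_monomial (q : MvPolynomial (Fin n) ℂ) (α : Fin n →₀ ℕ) (c : ℂ) :
    apair q (monomial α c) = q.coeff α * c := by
  rw [apair_comm, apair_eq_sum (support_monomial_subset (s := α) (a := c)), Finset.sum_singleton,
    coeff_monomial, if_pos rfl, mul_comm]

theorem apairₗ_injective : Function.Injective (apairₗ (n := n)) := fun a b h =>
  ext a b fun α => by simpa [apair_monomial] using LinearMap.congr_fun h (monomial α 1)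

theorem apair_eq_zero_of_mem_pow {k : ℕ} {q f : MvPolynomial (Fin n) ℂ}
    (hq : q.totalDegree < k) (hf : f ∈ idealOfVars (Fin n) ℂ ^ k) : apair q f = 0 :=
  Finset.sum_eq_zero fun α hα => by
    rw [(mem_pow_idealOfVars_iff' k f).1 hf α ((le_totalDegree hα).trans_lt hq), mul_zero]

theorem exists_apairₗ_eq {k : ℕ} (ℓ : Module.Dual ℂ (MvPolynomial (Fin n) ℂ))
    (hℓ : (idealOfVars (Fin n) ℂ ^ k).restrictScalars ℂ ≤ LinearMap.ker ℓ) :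
    ∃ p, apairₗ p = ℓ := by
  have hfin : (Function.support fun α => ℓ (monomial α 1)).Finite :=
    (Finsupp.finite_of_degree_lt k).subset fun α hα => by
      by_contra hk
      exact hα (hℓ ((monomial_mem_pow_idealOfVars_iff k α one_ne_zero).2 (not_lt.1 hk)))
  refine ⟨AddMonoidAlgebra.ofCoeff (Finsupp.ofSupportFinite _ hfin),
    linearMap_ext fun α => LinearMap.ext_ring ?_⟩
  exact (apair_monomial _ α 1).trans (mul_one _)

theorem coeff_contract (g q : MvPolynomial (Fin n) ℂ) (γ : Fin n →₀ ℕ) :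
    (contract g q).coeff γ = ∑ β ∈ g.support, g.coeff β * q.coeff (γ + β) := by
  classical
  simp only [contract, coeff_sum, apply_ite (coeff γ), coeff_monomial, coeff_zero, ← ite_and]
  refine Finset.sum_congr rfl fun β _ => ?_
  have hshift : ∀ α, (β ≤ α ∧ α - β = γ) ↔ γ + β = α := fun α =>
    ⟨fun ⟨hle, h⟩ => by rw [← h, tsub_add_cancel_of_le hle],
      by rintro rfl; exact ⟨le_add_self, add_tsub_cancel_right γ β⟩⟩
  simp +contextual [hshift]

theorem apair_contract (g p f : MvPolynomial (Fin n) ℂ) :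
    apair (contract g p) f = apair p (g * f) := by
  suffices apairₗ (contract g p) = apairₗ p ∘ₗ LinearMap.mulLeft ℂ g from
    LinearMap.congr_fun this f
  refine linearMap_ext fun γ => LinearMap.ext_ring ?_
  have hg : g * monomial γ 1 = ∑ β ∈ g.support, monomial (β + γ) (g.coeff β) := by
    conv_lhs => rw [g.as_sum]
    simp only [Finset.sum_mul, monomial_mul, mul_one]
  change apair (contract g p) (monomial γ 1) = apairₗ p (g * monomial γ 1)
  rw [hg, map_sum]
  simp [apair_monomial, coeff_contract, add_comm, mul_comm]

theorem contract_mem_dualSpace_colon {I : Ideal (MvPolynomial (Fin n) ℂ)}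
    {p : MvPolynomial (Fin n) ℂ} (g : MvPolynomial (Fin n) ℂ) (hp : p ∈ dualSpace I) :
    contract g p ∈ dualSpace (I.colon (Ideal.span {g})) := fun f hf => by
  rw [apair_contract, mul_comm]
  exact hp _ (Ideal.mem_colon_span_singleton.1 hf)

theorem exists_contract_eq_of_mem_dualSpace_colon {I : Ideal (MvPolynomial (Fin n) ℂ)}
    {g q : MvPolynomial (Fin n) ℂ} (hq : q ∈ dualSpace (I.colon (Ideal.span {g}))) :
    ∃ p ∈ dualSpace I, contract g p = q := by
  set 𝔪 := idealOfVars (Fin n) ℂ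
  obtain ⟨c, hc⟩ := I.exists_colon_sup_pow_le 𝔪 g
  set J := I ⊔ 𝔪 ^ (q.totalDegree + 1 + c)
  have hqJ : ∀ f ∈ J.colon (Ideal.span {g}), apair q f = 0 := fun f hf => by
    obtain ⟨u, hu, w, hw, rfl⟩ := Submodule.mem_sup.1 (hc _ hf)
    simpa [hq u hu, apair_eq_zero_of_mem_pow (Nat.lt_succ_self _) hw] using
      map_add (apairₗ q) u w
  obtain ⟨ψ, hJψ, hψ⟩ := Module.Dual.exists_comp_eq_of_comap_le_ker
    (LinearMap.mulLeft ℂ g) (J.restrictScalars ℂ) (apairₗ q) fun f hf =>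
      hqJ f (Ideal.mem_colon_span_singleton.2 (by rw [mul_comm]; exact hf))
  obtain ⟨p, rfl⟩ := exists_apairₗ_eq ψ fun f hf => hJψ (Ideal.mem_sup_right hf)
  refine ⟨p, fun f hf => hJψ (Ideal.mem_sup_left hf), apairₗ_injective ?_⟩
  rw [← hψ]
  ext f
  simp [apair_contract]

end Apolarity

open Apolarity in
/-- `D_0[I : ⟨g⟩] = g ∘ D_0[I]`. -/
theorem dualSpace_colon (n : ℕ) (I : Ideal (MvPolynomial (Fin n) ℂ))
    (g : MvPolynomial (Fin n) ℂ) :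
    (dualSpace (Submodule.colon I (Ideal.span {g})) : Set (MvPolynomial (Fin n) ℂ)) =
      contract g '' (dualSpace I : Set (MvPolynomial (Fin n) ℂ)) := by
  ext q
  constructor
  · exact exists_contract_eq_of_mem_dualSpace_colon
  · rintro ⟨p, hp, rfl⟩
    exact contract_mem_dualSpace_colon g hp
end
end

section
/- Let F be a finite subset of R = ℂ[x_1,…,x_n] consisting of nonzero polynomials, let I = ⟨F⟩, and let 0 ≠ g ∈ R. Then the image under the dehomogenization map φ of the colon ideal ⟨{f^h : f ∈ F}⟩ : ⟨g^h⟩ in ℂ[x_1,…,x_n,h] equals the colon ideal I : ⟨g⟩ in R. -/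
/-!
Dehomogenization is a ring map with `dehom ∘ homog = id`, so it sends `⟨F^h⟩ : ⟨g^h⟩` into
`I : ⟨g⟩`. Conversely, dehomogenization is injective on homogeneous polynomials of a fixed
degree, so a homogeneous `P` equals `h^k · (dehom P)^h`; and every `p ∈ ⟨F⟩` lifts to a
homogeneous element of `⟨F^h⟩` (pad the summands with powers of `h`). Hence `h^k p^h ∈ ⟨F^h⟩`
for some `k`. For `p = q g` we have `(q g)^h = q^h g^h` because `ℂ[x]` is a domain, so
`h^k q^h` lies in `⟨F^h⟩ : ⟨g^h⟩` and dehomogenizes to `q`.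
-/

open MvPolynomial

noncomputable section

/-- Homogenization: for `f` of total degree `d`,
`f^h = ∑_α (coeff α f) · x^α · h^{d - |α|}`, where `h` is the last variable. -/
def homog {n : ℕ} (f : MvPolynomial (Fin n) ℂ) : MvPolynomial (Fin (n + 1)) ℂ :=
  ∑ α ∈ f.support,
    monomial (Finsupp.mapDomain Fin.castSucc α +
        Finsupp.single (Fin.last n) (f.totalDegree - α.sum fun _ e => e))
      (f.coeff α)

/-- Dehomogenization `φ : ℂ[x₁,…,xₙ,h] → ℂ[x₁,…,xₙ]`, fixing each `xᵢ` and sending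
`h ↦ 1`. -/
def dehom {n : ℕ} : MvPolynomial (Fin (n + 1)) ℂ →ₐ[ℂ] MvPolynomial (Fin n) ℂ :=
  aeval (Fin.snoc X (1 : MvPolynomial (Fin n) ℂ))

namespace Finsupp

variable {M : Type*} {n : ℕ}

def init [Zero M] (m : Fin (n + 1) →₀ M) : Fin n →₀ M :=
  m.comapDomain Fin.castSucc (Fin.castSucc_injective n).injOn

@[simp]
theorem init_apply [Zero M] (m : Fin (n + 1) →₀ M) (i : Fin n) : init m i = m i.castSucc :=
  rfl

theorem init_mapDomain_castSucc_add_single_last [AddCommMonoid M] (α : Fin n →₀ M) (k : M) :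
    init (α.mapDomain Fin.castSucc + single (Fin.last n) k) = α := by
  ext i
  simp [mapDomain_apply (Fin.castSucc_injective n), (Fin.castSucc_lt_last i).ne]

theorem degree_eq_degree_init_add_last [AddCommMonoid M] (m : Fin (n + 1) →₀ M) :
    m.degree = (init m).degree + m (Fin.last n) := by
  simp [degree_eq_sum, Fin.sum_univ_castSucc]

theorem degree_init_le (m : Fin (n + 1) →₀ ℕ) : (init m).degree ≤ m.degree :=
  degree_comapDomain_le_of_canonicallyOrderedAdd _

theorem eq_of_init_eq_of_degree_eq {m m' : Fin (n + 1) →₀ ℕ} (h : init m = init m')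
    (hd : m.degree = m'.degree) : m = m' := by
  rw [degree_eq_degree_init_add_last, degree_eq_degree_init_add_last m', h] at hd
  ext i
  induction i using Fin.lastCases with
  | last => omega
  | cast i => simpa using DFunLike.congr_fun h i

end Finsupp

namespace MvPolynomial

variable {n : ℕ}

theorem dehom_monomial (m : Fin (n + 1) →₀ ℕ) (c : ℂ) :
    dehom (monomial m c) = monomial m.init c := by
  rw [dehom, aeval_monomial, monomial_eq, Finsupp.prod_pow, Finsupp.prod_pow,
    Fin.prod_univ_castSucc, Fin.snoc_last, one_pow, mul_one]
  simp only [Fin.snoc_castSucc, Finsupp.init_apply]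
  rfl

@[simp]
theorem dehom_X_last : dehom (X (Fin.last n)) = 1 := by
  rw [dehom, aeval_X, Fin.snoc_last]

theorem dehom_eq_sum (P : MvPolynomial (Fin (n + 1)) ℂ) :
    dehom P = ∑ m ∈ P.support, monomial m.init (P.coeff m) := by
  conv_lhs => rw [P.as_sum, map_sum]
  simp only [dehom_monomial]

theorem totalDegree_dehom_le (P : MvPolynomial (Fin (n + 1)) ℂ) :
    (dehom P).totalDegree ≤ P.totalDegree := by
  rw [dehom_eq_sum]
  refine (totalDegree_finsetSum _ _).trans (Finset.sup_le fun m hm => ?_)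
  exact (totalDegree_monomial_le _ _).trans
    ((Finsupp.degree_init_le m).trans (le_totalDegree hm))

theorem coeff_dehom_init {D : ℕ} {P : MvPolynomial (Fin (n + 1)) ℂ} (hP : P.IsHomogeneous D)
    {m : Fin (n + 1) →₀ ℕ} (hm : m.degree = D) : (dehom P).coeff m.init = P.coeff m := by
  classical
  rw [dehom_eq_sum, coeff_sum, Finset.sum_eq_single m]
  · rw [coeff_monomial, if_pos rfl]
  · intro m' hm' hne
    rw [coeff_monomial, if_neg fun h => hne (Finsupp.eq_of_init_eq_of_degree_eq h ?_)]
    rw [hm, Finsupp.degree_eq_weight_one]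
    exact hP (mem_support_iff.mp hm')
  · intro h
    rw [coeff_monomial, if_pos rfl, notMem_support_iff.mp h]

theorem IsHomogeneous.eq_of_dehom_eq {D : ℕ} {P Q : MvPolynomial (Fin (n + 1)) ℂ}
    (hP : P.IsHomogeneous D) (hQ : Q.IsHomogeneous D) (h : dehom P = dehom Q) : P = Q := by
  ext m
  by_cases hm : m.degree = D
  · rw [← coeff_dehom_init hP hm, ← coeff_dehom_init hQ hm, h]
  · rw [hP.coeff_eq_zero hm, hQ.coeff_eq_zero hm]

theorem isHomogeneous_homog (f : MvPolynomial (Fin n) ℂ) :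
    (homog f).IsHomogeneous f.totalDegree := by
  refine IsHomogeneous.sum _ _ _ fun α hα => isHomogeneous_monomial _ ?_
  rw [map_add, Finsupp.degree_mapDomain, Finsupp.degree_single]
  exact Nat.add_sub_cancel' (le_totalDegree hα)

@[simp]
theorem dehom_homog (f : MvPolynomial (Fin n) ℂ) : dehom (homog f) = f := by
  simp only [homog, map_sum, dehom_monomial, Finsupp.init_mapDomain_castSucc_add_single_last]
  exact (as_sum f).symm

@[simp]
theorem homog_zero : homog (0 : MvPolynomial (Fin n) ℂ) = 0 := by
  simp [homog]

theorem homog_mul (p q : MvPolynomial (Fin n) ℂ) : homog (p * q) = homog p * homog q := by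
  rcases eq_or_ne p 0 with rfl | hp
  · simp
  rcases eq_or_ne q 0 with rfl | hq
  · simp
  refine IsHomogeneous.eq_of_dehom_eq (D := p.totalDegree + q.totalDegree) ?_
    ((isHomogeneous_homog p).mul (isHomogeneous_homog q)) (by simp)
  rw [← totalDegree_mul_of_isDomain hp hq]
  exact isHomogeneous_homog _

theorem IsHomogeneous.eq_X_last_pow_mul_homog_dehom {D : ℕ} {P : MvPolynomial (Fin (n + 1)) ℂ}
    (hP : P.IsHomogeneous D) :
    P = X (Fin.last n) ^ (D - (dehom P).totalDegree) * homog (dehom P) := by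
  have hle : (dehom P).totalDegree ≤ D := (totalDegree_dehom_le P).trans hP.totalDegree_le
  refine hP.eq_of_dehom_eq ?_ (by simp)
  simpa [Nat.sub_add_cancel hle] using
    (isHomogeneous_X_pow (Fin.last n) (D - (dehom P).totalDegree)).mul
      (isHomogeneous_homog (dehom P))

theorem exists_isHomogeneous_mem_span_homog_dehom_eq {S : Set (MvPolynomial (Fin n) ℂ)}
    {p : MvPolynomial (Fin n) ℂ} (hp : p ∈ Ideal.span S) :
    ∃ P ∈ Ideal.span (homog '' S), ∃ D, P.IsHomogeneous D ∧ dehom P = p := by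
  induction hp using Submodule.span_induction with
  | mem s hs =>
    exact ⟨homog s, Ideal.subset_span ⟨s, hs, rfl⟩, _, isHomogeneous_homog s, dehom_homog s⟩
  | zero => exact ⟨0, Ideal.zero_mem _, 0, isHomogeneous_zero _ _ _, map_zero _⟩
  | add p q _ _ hp hq =>
    obtain ⟨P, hPJ, D, hP, rfl⟩ := hp
    obtain ⟨Q, hQJ, E, hQ, rfl⟩ := hq
    refine ⟨X (Fin.last n) ^ E * P + X (Fin.last n) ^ D * Q,
      add_mem (Ideal.mul_mem_left _ _ hPJ) (Ideal.mul_mem_left _ _ hQJ), E + D, ?_, by simp⟩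
    refine ((isHomogeneous_X_pow _ E).mul hP).add ?_
    rw [add_comm E]
    exact (isHomogeneous_X_pow _ D).mul hQ
  | smul a p _ hp =>
    obtain ⟨P, hPJ, D, hP, rfl⟩ := hp
    exact ⟨homog a * P, Ideal.mul_mem_left _ _ hPJ, _, (isHomogeneous_homog a).mul hP,
      by simp⟩

theorem exists_X_last_pow_mul_homog_mem_span {S : Set (MvPolynomial (Fin n) ℂ)}
    {p : MvPolynomial (Fin n) ℂ} (hp : p ∈ Ideal.span S) :
    ∃ k, X (Fin.last n) ^ k * homog p ∈ Ideal.span (homog '' S) := by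
  obtain ⟨P, hPJ, D, hP, rfl⟩ := exists_isHomogeneous_mem_span_homog_dehom_eq hp
  exact ⟨_, hP.eq_X_last_pow_mul_homog_dehom ▸ hPJ⟩

theorem map_dehom_span_homog (S : Set (MvPolynomial (Fin n) ℂ)) :
    Ideal.map dehom (Ideal.span (homog '' S)) = Ideal.span S := by
  simp [Ideal.map_span, Set.image_image]

end MvPolynomial

theorem dehom_image_colon_general (n : ℕ) (F : Finset (MvPolynomial (Fin n) ℂ))
    (I : Ideal (MvPolynomial (Fin n) ℂ))
    (hI : I = Ideal.span (F : Set (MvPolynomial (Fin n) ℂ)))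
    (g : MvPolynomial (Fin n) ℂ) :
    dehom '' (Submodule.colon (Ideal.span (homog '' (F : Set (MvPolynomial (Fin n) ℂ))))
        (Ideal.span {homog g}) : Set (MvPolynomial (Fin (n + 1)) ℂ)) =
      (Submodule.colon I (Ideal.span {g}) : Set (MvPolynomial (Fin n) ℂ)) := by
  subst hI
  ext q
  simp only [Set.mem_image, SetLike.mem_coe, Ideal.mem_colon_span_singleton]
  constructor
  · rintro ⟨P, hP, rfl⟩
    simpa [map_dehom_span_homog] using Ideal.mem_map_of_mem dehom hP
  · intro hq
    obtain ⟨k, hk⟩ := exists_X_last_pow_mul_homog_mem_span hq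
    refine ⟨X (Fin.last n) ^ k * homog q, ?_, by simp⟩
    rwa [mul_assoc, ← homog_mul]

/-- For a finite set `F` of nonzero polynomials generating `I` and a
nonzero `g`, the image under dehomogenization of `⟨F^h⟩ : ⟨g^h⟩` equals `I : ⟨g⟩`. -/
theorem dehom_image_colon (n : ℕ) (F : Finset (MvPolynomial (Fin n) ℂ))
    (hF : ∀ f ∈ F, f ≠ 0) (I : Ideal (MvPolynomial (Fin n) ℂ))
    (hI : I = Ideal.span (F : Set (MvPolynomial (Fin n) ℂ)))
    (g : MvPolynomial (Fin n) ℂ) (hg : g ≠ 0) :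
    dehom '' (Submodule.colon (Ideal.span (homog '' (F : Set (MvPolynomial (Fin n) ℂ))))
        (Ideal.span {homog g}) : Set (MvPolynomial (Fin (n + 1)) ℂ)) =
      (Submodule.colon I (Ideal.span {g}) : Set (MvPolynomial (Fin n) ℂ)) :=
  dehom_image_colon_general n F I hI g
end
end

section
/- Let R be a commutative ring, I an ideal of R, and f, h ∈ R. Assume h is a nonzerodivisor on R and the image of h in R/(I + ⟨f⟩) is a nonzerodivisor (i.e., for all a ∈ R, h·a ∈ I + ⟨f⟩ implies a ∈ I + ⟨f⟩). Then (I + ⟨h⟩) : ⟨f⟩ = (I : ⟨f⟩) + ⟨h⟩. -/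
/-- If `h` is a nonzerodivisor on `R` and on `R/(I + ⟨f⟩)`, then
`(I + ⟨h⟩) : ⟨f⟩ = (I : ⟨f⟩) + ⟨h⟩`. -/
theorem colon_add_span_generic {R : Type*} [CommRing R] (I : Ideal R) (f h : R)
    (hreg : ∀ a : R, h * a = 0 → a = 0)
    (hregQ : ∀ a : R, h * a ∈ I + Ideal.span {f} → a ∈ I + Ideal.span {f}) :
    Submodule.colon (I + Ideal.span {h}) (Ideal.span {f}) =
      Submodule.colon I (Ideal.span {f}) + Ideal.span {h} := by
  ext a
  rw [Ideal.mem_colon_span_singleton]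
  constructor
  · intro haf
    rw [Submodule.add_eq_sup, Submodule.mem_sup] at haf
    obtain ⟨i, hi, y, hy, hiy⟩ := haf
    rw [Ideal.mem_span_singleton'] at hy
    obtain ⟨c, rfl⟩ := hy
    have hc : c ∈ I + Ideal.span {f} := by
      apply hregQ
      rw [Submodule.add_eq_sup, Submodule.mem_sup]
      exact ⟨-i, I.neg_mem hi, a * f, Ideal.mem_span_singleton'.2 ⟨a, rfl⟩,
        by linear_combination -hiy⟩
    rw [Submodule.add_eq_sup, Submodule.mem_sup] at hc
    obtain ⟨j, hj, z, hz, hjz⟩ := hc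
    rw [Ideal.mem_span_singleton'] at hz
    obtain ⟨d, rfl⟩ := hz
    rw [Submodule.add_eq_sup, Submodule.mem_sup]
    refine ⟨a - d * h, ?_, d * h, Ideal.mem_span_singleton'.2 ⟨d, rfl⟩, by ring⟩
    rw [Ideal.mem_colon_span_singleton]
    have : (a - d * h) * f = i + j * h := by linear_combination -hiy - h * hjz
    rw [this]
    exact Submodule.add_mem _ hi (I.mul_mem_right _ hj)
  · intro ha
    rw [Submodule.add_eq_sup, Submodule.mem_sup] at ha
    obtain ⟨b, hb, y, hy, rfl⟩ := ha
    rw [Ideal.mem_colon_span_singleton] at hb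
    rw [Ideal.mem_span_singleton'] at hy
    obtain ⟨c, rfl⟩ := hy
    rw [Submodule.add_eq_sup, Submodule.mem_sup]
    exact ⟨b * f, hb, c * h * f, Ideal.mem_span_singleton'.2 ⟨c * f, by ring⟩, by ring⟩
end

section
/- Let R be a commutative ring, let Q_1,…,Q_r be ideals of R, and set I = Q_1 ∩ ⋯ ∩ Q_r. Let C be the cokernel of the natural injection R/I → ⊕_{i=1}^r R/Q_i. Assume h ∈ R is a nonzerodivisor on R and a nonzerodivisor on C (i.e., h·c = 0 in C implies c = 0). Then the natural map R/(I + ⟨h⟩) → ⊕_{i=1}^r R/(Q_i + ⟨h⟩) is injective; equivalently, ⋂_{i=1}^r (Q_i + ⟨h⟩) = I + ⟨h⟩. -/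
/-- If `h` is a nonzerodivisor on `R` and on the cokernel `C` of the
natural injection `R/I → ⊕ᵢ R/Qᵢ` (where `I = ⋂ᵢ Qᵢ`), then
`⋂ᵢ (Qᵢ + ⟨h⟩) = I + ⟨h⟩`, i.e. the natural map `R/(I + ⟨h⟩) → ⊕ᵢ R/(Qᵢ + ⟨h⟩)` is
injective. -/
theorem inf_add_span_generic {R : Type*} [CommRing R] {r : ℕ} (Q : Fin r → Ideal R)
    (I : Ideal R) (hI : I = ⨅ i, Q i) (h : R)
    (hreg : ∀ a : R, h * a = 0 → a = 0)
    (hC : ∀ c : (Π i, R ⧸ Q i) ⧸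
        LinearMap.range (LinearMap.pi fun i => (Q i).mkQ),
      h • c = 0 → c = 0) :
    (⨅ i, (Q i + Ideal.span {h})) = I + Ideal.span {h} := by
  subst hI
  apply le_antisymm
  · intro a ha
    rw [Ideal.mem_iInf] at ha
    have key : ∀ i, ∃ t : R, a - t * h ∈ Q i := by
      intro i
      have := ha i
      rw [Ideal.add_eq_sup, Submodule.mem_sup] at this
      obtain ⟨q, hq, z, hz, hsum⟩ := this
      rw [Ideal.mem_span_singleton] at hz
      obtain ⟨t, rfl⟩ := hz
      exact ⟨t, by rw [mul_comm]; simpa [← hsum] using hq⟩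
    choose t ht using key
    set c : Π i, R ⧸ Q i := fun i => Ideal.Quotient.mk (Q i) (t i) with hc
    have hc0 : h • (Submodule.Quotient.mk c :
        (Π i, R ⧸ Q i) ⧸ LinearMap.range (LinearMap.pi fun i => (Q i).mkQ)) = 0 := by
      rw [← Submodule.Quotient.mk_smul, Submodule.Quotient.mk_eq_zero]
      refine ⟨a, ?_⟩
      funext i
      simp only [LinearMap.pi_apply, Submodule.mkQ_apply, hc, Pi.smul_apply]
      have e : h • (Ideal.Quotient.mk (Q i)) (t i) = Ideal.Quotient.mk (Q i) (h * t i) := rfl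
      rw [e]
      change Ideal.Quotient.mk (Q i) a = _
      rw [Ideal.Quotient.eq]
      simpa [mul_comm] using ht i
    have := hC _ hc0
    rw [Submodule.Quotient.mk_eq_zero] at this
    obtain ⟨b, hb⟩ := this
    have hbi : ∀ i, b - t i ∈ Q i := by
      intro i
      have := congrFun hb i
      simp only [LinearMap.pi_apply, Submodule.mkQ_apply, hc] at this
      exact (Ideal.Quotient.eq).mp this
    have haI : a - b * h ∈ ⨅ i, Q i := by
      rw [Ideal.mem_iInf]
      intro i
      have : a - b * h = (a - t i * h) + (t i - b) * h := by ring
      rw [this]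
      exact (Q i).add_mem (ht i) ((Q i).mul_mem_right h (by
        have := (Q i).neg_mem (hbi i); simpa [neg_sub] using this))
    have : a = (a - b * h) + b * h := by ring
    rw [this]
    exact Submodule.add_mem_sup haI (Ideal.mem_span_singleton.mpr ⟨b, (mul_comm h b).symm⟩)
  · refine sup_le (le_iInf fun i => ?_) (le_iInf fun i => ?_)
    · exact le_trans (iInf_le _ i) le_sup_left
    · exact le_sup_right
end

section
/- Let R = ℂ[x_1,…,x_n] with maximal ideal m_0 = (x_1,…,x_n). Let Q_0 be a primary ideal with radical √Q_0 = m_0, and let Q_1,…,Q_r be primary ideals with Q_i ⊆ m_0 and Krull dimension of R/Q_i at least 1 for each i = 1,…,r. Set J = Q_1 ∩ ⋯ ∩ Q_r and I = Q_0 ∩ J. Then for every g ∈ R: g ∈ J if and only if the colon ideal I : ⟨g⟩ is zero-dimensional, i.e., the Krull dimension of R/(I : ⟨g⟩) is at most 0. -/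
open MvPolynomial

/-- If every prime containing `A` contains `B`, then `dim R/A ≤ dim R/B`. -/
lemma ringKrullDim_quot_le_quot {R : Type*} [CommRing R] {A B : Ideal R}
    (h : ∀ P : Ideal R, P.IsPrime → A ≤ P → B ≤ P) :
    ringKrullDim (R ⧸ A) ≤ ringKrullDim (R ⧸ B) := by
  let f : PrimeSpectrum (R ⧸ A) → PrimeSpectrum (R ⧸ B) := fun p =>
    have hp : (p.asIdeal.comap (Ideal.Quotient.mk A)).IsPrime := inferInstance
    have hA : A ≤ p.asIdeal.comap (Ideal.Quotient.mk A) := by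
      intro x hx
      simp [Ideal.mem_comap, Ideal.Quotient.eq_zero_iff_mem.mpr hx]
    ⟨(p.asIdeal.comap (Ideal.Quotient.mk A)).map (Ideal.Quotient.mk B),
      Ideal.map_isPrime_of_surjective Ideal.Quotient.mk_surjective
        (by rw [Ideal.mk_ker]; exact h _ hp hA)⟩
  have key : ∀ p : PrimeSpectrum (R ⧸ A),
      ((p.asIdeal.comap (Ideal.Quotient.mk A)).map (Ideal.Quotient.mk B)).comap
        (Ideal.Quotient.mk B) = p.asIdeal.comap (Ideal.Quotient.mk A) := by
    intro p
    have hp : (p.asIdeal.comap (Ideal.Quotient.mk A)).IsPrime := inferInstance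
    have hA : A ≤ p.asIdeal.comap (Ideal.Quotient.mk A) := by
      intro x hx
      simp [Ideal.mem_comap, Ideal.Quotient.eq_zero_iff_mem.mpr hx]
    rw [Ideal.comap_map_of_surjective _ Ideal.Quotient.mk_surjective,
      ← RingHom.ker_eq_comap_bot, Ideal.mk_ker, sup_eq_left.mpr (h _ hp hA)]
  have hf : StrictMono f := by
    intro p q hpq
    have h1 : p.asIdeal.comap (Ideal.Quotient.mk A) < q.asIdeal.comap (Ideal.Quotient.mk A) := by
      refine lt_of_le_of_ne (Ideal.comap_mono hpq.le) fun hEq => ?_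
      exact hpq.ne (PrimeSpectrum.ext
        (Ideal.comap_injective_of_surjective _ Ideal.Quotient.mk_surjective hEq))
    refine lt_of_le_of_ne (Ideal.map_mono h1.le) fun hEq => ?_
    have : p.asIdeal.comap (Ideal.Quotient.mk A) = q.asIdeal.comap (Ideal.Quotient.mk A) := by
      have := congrArg (Ideal.comap (Ideal.Quotient.mk B))
        (congrArg PrimeSpectrum.asIdeal hEq)
      rwa [key p, key q] at this
    exact h1.ne this
  exact Order.krullDim_le_of_strictMono f hf

/-- The ideal `(X₁, …, Xₙ)` is maximal: it is the kernel of `constantCoeff`. -/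
lemma span_range_X_isMaximal (n : ℕ) :
    (Ideal.span (Set.range (X : Fin n → MvPolynomial (Fin n) ℂ))).IsMaximal := by
  have hker : Ideal.span (Set.range (X : Fin n → MvPolynomial (Fin n) ℂ)) =
      RingHom.ker (constantCoeff (R := ℂ) (σ := Fin n)) := by
    ext p
    rw [← Set.image_univ]
    rw [MvPolynomial.mem_ideal_span_X_image]
    constructor
    · intro hp
      have h0 : (0 : Fin n →₀ ℕ) ∉ p.support := by
        intro h
        obtain ⟨i, -, hi⟩ := hp 0 h
        simp at hi
      simpa [RingHom.mem_ker, constantCoeff_eq, coeff] using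
        MvPolynomial.notMem_support_iff.mp h0
    · intro hp m hm
      have hm0 : m ≠ 0 := by
        intro h
        subst h
        exact MvPolynomial.notMem_support_iff.mpr
          (by simpa [RingHom.mem_ker, constantCoeff_eq, coeff] using hp) hm
      obtain ⟨i, hi⟩ := Finsupp.ne_iff.mp hm0
      exact ⟨i, trivial, by simpa using hi⟩
  rw [hker]
  exact RingHom.ker_isMaximal_of_surjective _ fun a => ⟨C a, constantCoeff_C _ _⟩

/-- Let `Q₀` be primary with radical `m₀ = (x₁,…,xₙ)`, and let
`Q₁,…,Q_r` be primary ideals contained in `m₀` with `dim R/Qᵢ ≥ 1`. Set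
`J = Q₁ ∩ ⋯ ∩ Q_r` and `I = Q₀ ∩ J`. Then `g ∈ J` iff `I : ⟨g⟩` is zero-dimensional. -/
theorem mem_inf_iff_colon_zero_dimensional (n r : ℕ)
    (Q0 : Ideal (MvPolynomial (Fin n) ℂ)) (hQ0 : Q0.IsPrimary)
    (hQ0rad : Q0.radical = Ideal.span (Set.range (X : Fin n → MvPolynomial (Fin n) ℂ)))
    (Q : Fin r → Ideal (MvPolynomial (Fin n) ℂ))
    (hQ : ∀ i, (Q i).IsPrimary)
    (hQm : ∀ i, Q i ≤ Ideal.span (Set.range (X : Fin n → MvPolynomial (Fin n) ℂ)))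
    (hQdim : ∀ i, 1 ≤ ringKrullDim (MvPolynomial (Fin n) ℂ ⧸ Q i))
    (J I : Ideal (MvPolynomial (Fin n) ℂ)) (hJ : J = ⨅ i, Q i) (hI : I = Q0 ⊓ J)
    (g : MvPolynomial (Fin n) ℂ) :
    g ∈ J ↔ ringKrullDim (MvPolynomial (Fin n) ℂ ⧸ Submodule.colon I (Ideal.span {g})) ≤ 0 := by
  have hmax : (Ideal.span (Set.range (X : Fin n → MvPolynomial (Fin n) ℂ))).IsMaximal := span_range_X_isMaximal n
  constructor
  · intro hg
    -- Q0 ≤ I : ⟨g⟩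
    have hQ0le : Q0 ≤ Submodule.colon I (Ideal.span {g}) := by
      intro a ha
      rw [Ideal.mem_colon_span_singleton, hI]
      exact ⟨Ideal.mul_mem_right g Q0 ha, Ideal.mul_mem_left J a hg⟩
    -- dim R/(I:g) ≤ dim R/Q0
    have h1 : ringKrullDim (MvPolynomial (Fin n) ℂ ⧸ Submodule.colon I (Ideal.span {g})) ≤ ringKrullDim (MvPolynomial (Fin n) ℂ ⧸ Q0) :=
      ringKrullDim_quot_le_quot fun P hP hle => le_trans hQ0le hle
    -- dim R/Q0 ≤ 0, because Spec(R/Q0) is a subsingleton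
    have hsub : Subsingleton (PrimeSpectrum (MvPolynomial (Fin n) ℂ ⧸ Q0)) := by
      constructor
      intro p q
      have hp : ∀ s : PrimeSpectrum (MvPolynomial (Fin n) ℂ ⧸ Q0),
          s.asIdeal.comap (Ideal.Quotient.mk Q0) = Ideal.span (Set.range (X : Fin n → MvPolynomial (Fin n) ℂ)) := by
        intro s
        have hQ0s : Q0 ≤ s.asIdeal.comap (Ideal.Quotient.mk Q0) := by
          intro x hx
          simp [Ideal.mem_comap, Ideal.Quotient.eq_zero_iff_mem.mpr hx]
        have hrad : Ideal.span (Set.range (X : Fin n → MvPolynomial (Fin n) ℂ)) ≤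
            s.asIdeal.comap (Ideal.Quotient.mk Q0) := by
          rw [← hQ0rad]
          exact (Ideal.IsPrime.radical_le_iff inferInstance).mpr hQ0s
        exact (hmax.eq_of_le (Ideal.IsPrime.ne_top inferInstance) hrad).symm
      have := (hp p).trans (hp q).symm
      exact PrimeSpectrum.ext
        (Ideal.comap_injective_of_surjective _ Ideal.Quotient.mk_surjective this)
    exact le_trans h1 (le_trans (Order.krullDim_nonpos_of_subsingleton) le_rfl)
  · intro hdim
    by_contra hg
    rw [hJ, Ideal.mem_iInf] at hg
    push_neg at hg
    obtain ⟨i, hgi⟩ := hg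
    -- I : ⟨g⟩ ≤ radical (Q i)
    have hcol : Submodule.colon I (Ideal.span {g}) ≤ (Q i).radical := by
      intro a ha
      rw [Ideal.mem_colon_span_singleton] at ha
      have hga : g * a ∈ Q i := by
        have : a * g ∈ J := (hI ▸ ha).2
        rw [hJ, Ideal.mem_iInf] at this
        simpa [mul_comm] using this i
      rcases ((Ideal.isPrimary_iff).mp (hQ i)).2 hga with h | h
      · exact absurd h hgi
      · exact h
    have h2 : ringKrullDim (MvPolynomial (Fin n) ℂ ⧸ Q i) ≤
        ringKrullDim (MvPolynomial (Fin n) ℂ ⧸ Submodule.colon I (Ideal.span {g})) := by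
      refine ringKrullDim_quot_le_quot fun P hP hle => ?_
      exact le_trans hcol ((Ideal.IsPrime.radical_le_iff hP).mpr hle)
    have : (1 : WithBot (WithTop ℕ)) ≤ 0 := le_trans (hQdim i) (le_trans h2 hdim)
    norm_num at this
end

section
/- Let R = ℂ[x_1,…,x_n], let I ⊆ R be an ideal and f ∈ R. Then f belongs to the local part IR_0 ∩ R of I at the origin (i.e., there exists s ∈ R with s(0) ≠ 0 and s·f ∈ I) if and only if ⟨q, f⟩ = 0 for every q in the Macaulay dual space D_0[I]. -/
open MvPolynomial

noncomputable section

/-! Let `𝔪 = idealOfVars`. A polynomial `q` pairs only with the coefficients of `f` of degree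
`≤ deg q`, so `⟨q, ·⟩` factors through `R ⧸ 𝔪^(deg q + 1)`, in which any `s` with `s(0) ≠ 0` is
invertible; hence `s f ∈ I` forces `⟨q, f⟩ = 0`. Conversely, every linear functional on `R`
vanishing on `𝔪^k` is `⟨q, ·⟩` for some `q` of degree `< k`, so an `f` annihilated by `D_0[I]`
lies in `I + 𝔪^k` for every `k`. Krull's intersection theorem in the `R`-module `R ⧸ I` then
yields `a ∈ 𝔪` with `(1 - a) f ∈ I`. -/

theorem Ideal.exists_mul_sub_one_mem_pow {A : Type*} [CommRing A] {J : Ideal A} {v : A}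
    (hv : 1 - v ∈ J) (k : ℕ) : ∃ t : A, t * v - 1 ∈ J ^ k := by
  refine ⟨∑ i ∈ Finset.range k, (1 - v) ^ i, ?_⟩
  have h := geom_sum_mul_neg (1 - v) k
  rw [sub_sub_cancel] at h
  rw [h, sub_sub_cancel_left]
  exact (J ^ k).neg_mem (Ideal.pow_mem_pow hv k)

theorem Ideal.exists_one_sub_mul_mem_of_forall_mem_sup_pow {A : Type*} [CommRing A]
    [IsNoetherianRing A] {I J : Ideal A} {f : A} (h : ∀ k : ℕ, f ∈ I ⊔ J ^ k) :
    ∃ a ∈ J, (1 - a) * f ∈ I := by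
  have hf : Submodule.Quotient.mk (p := I) f ∈ (⨅ k : ℕ, J ^ k • ⊤ : Submodule A (A ⧸ I)) := by
    refine Submodule.mem_iInf _ |>.mpr fun k => ?_
    obtain ⟨a, ha, b, hb, rfl⟩ := Submodule.mem_sup.mp (h k)
    rw [Submodule.Quotient.mk_add, (Submodule.Quotient.mk_eq_zero I).mpr ha, zero_add,
      ← mul_one b, ← smul_eq_mul, Submodule.Quotient.mk_smul]
    exact Submodule.smul_mem_smul hb Submodule.mem_top
  obtain ⟨⟨a, ha⟩, hfix⟩ := (J.mem_iInf_smul_pow_eq_bot_iff _).mp hf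
  refine ⟨a, ha, (Submodule.Quotient.mk_eq_zero I).mp ?_⟩
  rw [sub_mul, one_mul, Submodule.Quotient.mk_sub, ← smul_eq_mul, Submodule.Quotient.mk_smul,
    hfix, sub_self]

theorem MvPolynomial.mem_idealOfVars_iff {σ R : Type*} [CommSemiring R] {p : MvPolynomial σ R} :
    p ∈ idealOfVars σ R ↔ constantCoeff p = 0 := by
  rw [← pow_one (idealOfVars σ R), mem_pow_idealOfVars_iff', constantCoeff_eq]
  simp only [Nat.lt_one_iff, Finsupp.degree_eq_zero_iff, forall_eq]

section Apolarity

variable {n : ℕ}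

theorem apair_sub_right (q f g : MvPolynomial (Fin n) ℂ) :
    apair q (f - g) = apair q f - apair q g := by
  simp only [apair, coeff_sub, mul_sub, Finset.sum_sub_distrib]

theorem apair_eq_zero_of_mem_pow_idealOfVars {q f : MvPolynomial (Fin n) ℂ}
    (hf : f ∈ idealOfVars (Fin n) ℂ ^ (q.totalDegree + 1)) : apair q f = 0 :=
  Finset.sum_eq_zero fun _ hα => by
    rw [(mem_pow_idealOfVars_iff' _ f).mp hf _ (Nat.lt_succ_of_le (le_totalDegree hα)),
      mul_zero]

theorem apair_eq_zero_of_mul_mem {I : Ideal (MvPolynomial (Fin n) ℂ)}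
    {q s f : MvPolynomial (Fin n) ℂ} (hq : q ∈ dualSpace I) (hs : constantCoeff s ≠ 0)
    (hsf : s * f ∈ I) : apair q f = 0 := by
  set c := constantCoeff s
  have hone_sub : 1 - C c⁻¹ * s ∈ idealOfVars (Fin n) ℂ := by
    rw [mem_idealOfVars_iff, map_sub, map_one, map_mul, constantCoeff_C, inv_mul_cancel₀ hs,
      sub_self]
  obtain ⟨t, ht⟩ := Ideal.exists_mul_sub_one_mem_pow hone_sub (q.totalDegree + 1)
  have hdiff : (t * C c⁻¹) * (s * f) - f ∈ idealOfVars (Fin n) ℂ ^ (q.totalDegree + 1) := by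
    convert Ideal.mul_mem_right f _ ht using 1
    ring
  calc apair q f = apair q (t * C c⁻¹ * (s * f)) - apair q (t * C c⁻¹ * (s * f) - f) := by
        rw [apair_sub_right, sub_sub_cancel]
    _ = 0 := by
        rw [hq _ (I.mul_mem_left _ hsf), apair_eq_zero_of_mem_pow_idealOfVars hdiff, sub_zero]

open scoped Classical in
theorem exists_apair_eq_of_pow_idealOfVars_le_ker {φ : Module.Dual ℂ (MvPolynomial (Fin n) ℂ)}
    {k : ℕ} (hφ : ∀ g ∈ idealOfVars (Fin n) ℂ ^ k, φ g = 0) :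
    ∃ q : MvPolynomial (Fin n) ℂ, ∀ g, apair q g = φ g := by
  set S := (Finsupp.finite_of_degree_lt (σ := Fin n) k).toFinset
  set q := ∑ α ∈ S, monomial α (φ (monomial α 1))
  have hq : ∀ α, q.coeff α = if α ∈ S then φ (monomial α 1) else 0 := fun α => by
    simp only [q, coeff_sum, coeff_monomial, Finset.sum_ite_eq']
  have hsupp : q.support ⊆ S := fun α hα => by
    by_contra hS
    exact mem_support_iff.mp hα (by rw [hq, if_neg hS])
  refine ⟨q, fun g => ?_⟩
  have htrunc : g - ∑ α ∈ S, monomial α (g.coeff α) ∈ idealOfVars (Fin n) ℂ ^ k := by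
    refine (mem_pow_idealOfVars_iff' k _).mpr fun β hβ => ?_
    have hβS : β ∈ S := (Finsupp.finite_of_degree_lt k).mem_toFinset.mpr hβ
    simp only [coeff_sub, coeff_sum, coeff_monomial, Finset.sum_ite_eq', if_pos hβS, sub_self]
  calc apair q g = ∑ α ∈ S, φ (monomial α 1) * g.coeff α :=
        (apair_eq_sum hsupp g).trans (Finset.sum_congr rfl fun α hα => by rw [hq, if_pos hα])
    _ = φ (∑ α ∈ S, monomial α (g.coeff α)) := by
        rw [map_sum]
        refine Finset.sum_congr rfl fun α _ => ?_
        rw [mul_comm, ← smul_eq_mul, ← map_smul, smul_monomial, smul_eq_mul, mul_one]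
    _ = φ g := by rw [← sub_eq_zero, ← map_sub, ← neg_sub, map_neg, hφ _ htrunc, neg_zero]

theorem mem_sup_pow_idealOfVars_of_forall_apair_eq_zero {I : Ideal (MvPolynomial (Fin n) ℂ)}
    {f : MvPolynomial (Fin n) ℂ} (h : ∀ q ∈ dualSpace I, apair q f = 0) (k : ℕ) :
    f ∈ I ⊔ idealOfVars (Fin n) ℂ ^ k := by
  by_contra hf
  obtain ⟨φ, hφf, hker⟩ :=
    Submodule.exists_le_ker_of_notMem (p := (I ⊔ idealOfVars (Fin n) ℂ ^ k).restrictScalars ℂ) hf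
  obtain ⟨q, hq⟩ := exists_apair_eq_of_pow_idealOfVars_le_ker fun g hg =>
    hker (Ideal.mem_sup_right hg)
  exact hφf (hq f ▸ h q fun g hg => (hq g).trans (hker (Ideal.mem_sup_left hg)))

end Apolarity

/-- `f ∈ IR₀ ∩ R` (the local part of `I` at the origin) iff `⟨q, f⟩ = 0`
for every `q` in the Macaulay dual space `D_0[I]`. -/
theorem mem_localPart_iff_apair_eq_zero (n : ℕ) (I : Ideal (MvPolynomial (Fin n) ℂ))
    (f : MvPolynomial (Fin n) ℂ) :
    (∃ s : MvPolynomial (Fin n) ℂ, eval (0 : Fin n → ℂ) s ≠ 0 ∧ s * f ∈ I) ↔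
      ∀ q ∈ dualSpace I, apair q f = 0 := by
  rw [eval_zero]
  constructor
  · rintro ⟨s, hs, hsf⟩ q hq
    exact apair_eq_zero_of_mul_mem hq hs hsf
  · intro h
    obtain ⟨a, ha, haf⟩ := Ideal.exists_one_sub_mul_mem_of_forall_mem_sup_pow
      (mem_sup_pow_idealOfVars_of_forall_apair_eq_zero h)
    refine ⟨1 - a, ?_, haf⟩
    rw [map_sub, map_one, mem_idealOfVars_iff.mp ha, sub_zero]
    exact one_ne_zero
end
end

section
/- Let R = ℂ[x_1,…,x_n] and let I_1, I_2 ⊆ R be ideals. Then the Macaulay dual space of the intersection is the sum of the dual spaces: D_0[I_1 ∩ I_2] = D_0[I_1] + D_0[I_2] as ℂ-subspaces of R. -/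
open MvPolynomial

noncomputable section

/-! By Artin–Rees, `(I₁ + 𝔪^(N+c)) ∩ (I₂ + 𝔪^(N+c)) ⊆ I₁ ∩ I₂ + 𝔪^N` for a fixed `c`, where `𝔪` is
the ideal of the origin. A dual element `q` of degree `< N` also kills `𝔪^N`, so it kills the left
side. For two subspaces the annihilator of the intersection is the sum of the annihilators, so the
functional `⟨q, -⟩` splits as `φ₁ + φ₂` with `φᵢ` vanishing on `Iᵢ + 𝔪^(N+c)`. A functional
vanishing on a power of `𝔪` only sees finitely many coefficients, hence is `⟨qᵢ, -⟩` for a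
polynomial `qᵢ`, and `q = q₁ + q₂` because the pairing is nondegenerate. -/

section ArtinRees

variable {R : Type*} [CommRing R] [IsNoetherianRing R]

theorem Ideal.exists_pow_inf_sup_le_inf_pow_sup_inf_pow (m I J : Ideal R) :
    ∃ c, ∀ N, m ^ (N + c) ⊓ (I ⊔ J) ≤ (I ⊓ m ^ N) ⊔ (J ⊓ m ^ N) := by
  obtain ⟨c, hc⟩ := m.exists_pow_inf_eq_pow_smul (I ⊔ J)
  refine ⟨c, fun N => ?_⟩
  have hAR : m ^ (N + c) ⊓ (I ⊔ J) ≤ m ^ N * (I ⊔ J) := by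
    have := hc (N + c) (by omega)
    simp only [Ideal.smul_eq_mul, Ideal.mul_top, Nat.add_sub_cancel] at this
    exact this.le.trans (Ideal.mul_mono_right inf_le_right)
  refine hAR.trans ?_
  rw [Submodule.mul_sup]
  exact sup_le_sup (le_inf Ideal.mul_le_right Ideal.mul_le_left)
    (le_inf Ideal.mul_le_right Ideal.mul_le_left)

theorem Ideal.exists_sup_pow_inf_sup_pow_le (m I J : Ideal R) :
    ∃ c, ∀ N, (I ⊔ m ^ (N + c)) ⊓ (J ⊔ m ^ (N + c)) ≤ (I ⊓ J) ⊔ m ^ N := by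
  obtain ⟨c, hc⟩ := m.exists_pow_inf_sup_le_inf_pow_sup_inf_pow I J
  refine ⟨c, fun N f hf => ?_⟩
  obtain ⟨hfI, hfJ⟩ := Submodule.mem_inf.mp hf
  obtain ⟨i, hi, u, hu, rfl⟩ := Submodule.mem_sup.mp hfI
  obtain ⟨j, hj, v, hv, hij⟩ := Submodule.mem_sup.mp hfJ
  have hdiff : i - j ∈ m ^ (N + c) ⊓ (I ⊔ J) :=
    ⟨by rw [show i - j = v - u by linear_combination -hij]; exact sub_mem hv hu,
      sub_mem (Submodule.mem_sup_left hi) (Submodule.mem_sup_right hj)⟩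
  obtain ⟨a, ⟨haI, haN⟩, b, ⟨hbJ, -⟩, hab⟩ := Submodule.mem_sup.mp (hc N hdiff)
  have hiJ : i - a ∈ J := by
    rw [show i - a = j + b by linear_combination -hab]; exact add_mem hj hbJ
  refine Submodule.mem_sup.mpr ⟨i - a, ⟨sub_mem hi haI, hiJ⟩, u + a, ?_, by ring⟩
  exact add_mem (Ideal.pow_le_pow_right (by omega) hu) haN

end ArtinRees

section Pairing

open Finsupp

variable {n : ℕ}

def apairDual (q : MvPolynomial (Fin n) ℂ) : Module.Dual ℂ (MvPolynomial (Fin n) ℂ) where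
  toFun := apair q
  map_add' f g := by
    simp only [apair, coeff_add, mul_add, Finset.sum_add_distrib]
  map_smul' c f := by
    simp only [apair, coeff_smul, smul_eq_mul, RingHom.id_apply, Finset.mul_sum]
    exact Finset.sum_congr rfl fun _ _ => by ring

@[simp]
theorem apairDual_apply (q f : MvPolynomial (Fin n) ℂ) : apairDual q f = apair q f := rfl

theorem apair_monomial_one (q : MvPolynomial (Fin n) ℂ) (α : Fin n →₀ ℕ) :
    apair q (monomial α 1) = coeff α q := by
  rw [apair_eq_sum (Finset.subset_union_left (s₂ := {α}))]
  simp [coeff_monomial]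

theorem apairDual_add (p q : MvPolynomial (Fin n) ℂ) :
    apairDual (p + q) = apairDual p + apairDual q :=
  MvPolynomial.linearMap_ext fun α => LinearMap.ext_ring <| by
    simp [apair_monomial_one]

theorem apairDual_injective : Function.Injective (apairDual (n := n)) := fun p q h =>
  MvPolynomial.ext p q fun α => by
    simpa [apair_monomial_one] using LinearMap.congr_fun h (monomial α 1)

theorem mem_dualSpace_iff {I : Ideal (MvPolynomial (Fin n) ℂ)} {q : MvPolynomial (Fin n) ℂ} :
    q ∈ dualSpace I ↔ apairDual q ∈ (I.restrictScalars ℂ).dualAnnihilator := by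
  rw [Submodule.mem_dualAnnihilator]
  rfl

theorem dualSpace_antitone : Antitone (dualSpace (n := n)) :=
  fun _ _ hIJ _ hq f hf => hq f (hIJ hf)

theorem dualSpace_sup (I J : Ideal (MvPolynomial (Fin n) ℂ)) :
    dualSpace (I ⊔ J) = dualSpace I ⊓ dualSpace J := by
  refine le_antisymm (le_inf (dualSpace_antitone le_sup_left) (dualSpace_antitone le_sup_right))
    fun q ⟨hI, hJ⟩ f hf => ?_
  obtain ⟨a, ha, b, hb, rfl⟩ := Submodule.mem_sup.mp hf
  rw [← apairDual_apply, map_add, apairDual_apply, apairDual_apply, hI a ha, hJ b hb, add_zero]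

theorem mem_dualSpace_pow_idealOfVars {q : MvPolynomial (Fin n) ℂ} {N : ℕ}
    (hq : q.totalDegree < N) : q ∈ dualSpace (idealOfVars (Fin n) ℂ ^ N) := fun f hf =>
  Finset.sum_eq_zero fun α hα => by
    rw [(mem_pow_idealOfVars_iff' N f).mp hf α ((le_totalDegree hα).trans_lt hq), mul_zero]

theorem exists_apairDual_eq {N : ℕ} (φ : Module.Dual ℂ (MvPolynomial (Fin n) ℂ))
    (hφ : ∀ f ∈ idealOfVars (Fin n) ℂ ^ N, φ f = 0) : ∃ p, apairDual p = φ := by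
  set S := (finite_of_degree_lt (σ := Fin n) N).toFinset
  refine ⟨∑ α ∈ S, monomial α (φ (monomial α 1)), MvPolynomial.linearMap_ext fun α => ?_⟩
  refine LinearMap.ext_ring ?_
  by_cases hα : degree α < N
  · simp [apair_monomial_one, coeff_sum, coeff_monomial, S, hα]
  · have hmem : monomial α 1 ∈ idealOfVars (Fin n) ℂ ^ N :=
      (monomial_mem_pow_idealOfVars_iff N α one_ne_zero).mpr (not_lt.mp hα)
    simp [apair_monomial_one, coeff_sum, coeff_monomial, S, hα, hφ _ hmem]

end Pairing

/-- `D_0[I₁ ∩ I₂] = D_0[I₁] + D_0[I₂]`. -/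
theorem dualSpace_inf (n : ℕ) (I₁ I₂ : Ideal (MvPolynomial (Fin n) ℂ)) :
    dualSpace (I₁ ⊓ I₂) = dualSpace I₁ + dualSpace I₂ := by
  rw [Submodule.add_eq_sup]
  refine le_antisymm (fun q hq => ?_)
    (sup_le (dualSpace_antitone inf_le_left) (dualSpace_antitone inf_le_right))
  set 𝔪 := idealOfVars (Fin n) ℂ
  set N := q.totalDegree + 1
  obtain ⟨c, hc⟩ := 𝔪.exists_sup_pow_inf_sup_pow_le I₁ I₂
  have hq' : q ∈ dualSpace ((I₁ ⊔ 𝔪 ^ (N + c)) ⊓ (I₂ ⊔ 𝔪 ^ (N + c))) :=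
    dualSpace_antitone (hc N) <| (dualSpace_sup _ _).ge
      ⟨hq, mem_dualSpace_pow_idealOfVars (Nat.lt_succ_self _)⟩
  rw [mem_dualSpace_iff, Submodule.restrictScalars_inf, Subspace.dualAnnihilator_inf_eq] at hq'
  obtain ⟨φ₁, hφ₁, φ₂, hφ₂, hφ⟩ := Submodule.mem_sup.mp hq'
  obtain ⟨q₁, rfl⟩ := exists_apairDual_eq φ₁ fun f hf =>
    (Submodule.mem_dualAnnihilator _).mp hφ₁ f (Submodule.mem_sup_right hf)
  obtain ⟨q₂, rfl⟩ := exists_apairDual_eq φ₂ fun f hf =>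
    (Submodule.mem_dualAnnihilator _).mp hφ₂ f (Submodule.mem_sup_right hf)
  rw [← mem_dualSpace_iff, dualSpace_sup] at hφ₁ hφ₂
  exact Submodule.mem_sup.mpr
    ⟨q₁, hφ₁.1, q₂, hφ₂.1, apairDual_injective (by rw [apairDual_add, hφ])⟩
end
end

section
/- Let R = ℂ[x_1,…,x_n] with maximal ideal m_0 = (x_1,…,x_n), let I ⊆ R be an ideal and k ∈ ℕ. Then the truncated dual space D_0^k[I] and the quotient ring R/(I + m_0^{k+1}) have the same (finite) dimension as ℂ-vector spaces: dim_ℂ D_0^k[I] = dim_ℂ R/(I + m_0^{k+1}). -/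
open MvPolynomial

noncomputable section

/-!
Truncation at total degree `k` identifies `R ⧸ (I + m₀ ^ (k + 1))` with `V ⧸ W`, where `V` is the
space of polynomials of total degree `≤ k` and `W` the truncation of `I`, because `m₀ ^ (k + 1)` is
exactly the kernel of the truncation. On `V` the apolarity pairing is nondegenerate (the monomials
are orthonormal), and a `q ∈ V` only sees coefficients of degree `≤ k`, so `D₀ᵏ[I]` is the
orthogonal of `W` in `V`. Hence `dim D₀ᵏ[I] = dim V - dim W = dim (V ⧸ W)`.
-/

namespace LinearMap

variable {R M M₂ : Type*} [Ring R] [AddCommGroup M] [Module R M] [AddCommGroup M₂] [Module R M₂]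

def quotSupKerEquivOfSurjective (f : M →ₗ[R] M₂) (hf : Function.Surjective f)
    (p : Submodule R M) : (M ⧸ (p ⊔ ker f)) ≃ₗ[R] M₂ ⧸ p.map f :=
  (Submodule.quotEquivOfEq _ _ (by rw [ker_comp, Submodule.ker_mkQ, Submodule.comap_map_eq])).trans
    (((p.map f).mkQ ∘ₗ f).quotKerEquivOfSurjective ((p.map f).mkQ_surjective.comp hf))

theorem BilinForm.finrank_orthogonal_eq_finrank_quotient {K V : Type*} [Field K]
    [AddCommGroup V] [Module K V] [FiniteDimensional K V] {B : LinearMap.BilinForm K V}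
    (hB : B.Nondegenerate) (W : Submodule K V) :
    Module.finrank K (B.orthogonal W) = Module.finrank K (V ⧸ W) := by
  rw [finrank_orthogonal hB, ← W.finrank_quotient_add_finrank, Nat.add_sub_cancel]

end LinearMap

namespace MvPolynomial

variable {σ R : Type*} [CommSemiring R]

theorem coeff_eq_zero_of_totalDegree_le {p : MvPolynomial σ R} {k : ℕ} (hp : p.totalDegree ≤ k)
    {α : σ →₀ ℕ} (hα : k < α.degree) : p.coeff α = 0 :=
  notMem_support_iff.1 fun h => ((le_totalDegree h).trans hp).not_gt hα

theorem coeff_sum_homogeneousComponent_apply (k : ℕ) (f : MvPolynomial σ R) (α : σ →₀ ℕ) :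
    ((∑ i ∈ Finset.range (k + 1), homogeneousComponent i) f).coeff α =
      if α.degree ≤ k then f.coeff α else 0 := by
  classical
  simp [coeff_sum, coeff_homogeneousComponent]

variable (σ R) in
def truncTotalDegree (k : ℕ) : MvPolynomial σ R →ₗ[R] restrictTotalDegree σ R k :=
  LinearMap.codRestrict _ (∑ i ∈ Finset.range (k + 1), homogeneousComponent i) fun f => by
    rw [mem_restrictTotalDegree, totalDegree, Finset.sup_le_iff]
    intro α hα
    by_contra h
    exact mem_support_iff.1 hα <| by
      rw [coeff_sum_homogeneousComponent_apply, if_neg (show ¬α.degree ≤ k from h)]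

theorem coeff_truncTotalDegree (k : ℕ) (f : MvPolynomial σ R) (α : σ →₀ ℕ) :
    (truncTotalDegree σ R k f : MvPolynomial σ R).coeff α =
      if α.degree ≤ k then f.coeff α else 0 :=
  coeff_sum_homogeneousComponent_apply k f α

theorem truncTotalDegree_coe (k : ℕ) (p : restrictTotalDegree σ R k) :
    truncTotalDegree σ R k (p : MvPolynomial σ R) = p := by
  ext α
  rw [coeff_truncTotalDegree, ite_eq_left_iff, not_le, eq_comm]
  exact coeff_eq_zero_of_totalDegree_le ((mem_restrictTotalDegree _ _ _).1 p.2)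

theorem truncTotalDegree_surjective (k : ℕ) : Function.Surjective (truncTotalDegree σ R k) :=
  fun p => ⟨p, truncTotalDegree_coe k p⟩

theorem ker_truncTotalDegree (k : ℕ) :
    LinearMap.ker (truncTotalDegree σ R k) = (idealOfVars σ R ^ (k + 1)).restrictScalars R := by
  ext f
  simp only [LinearMap.mem_ker, Submodule.restrictScalars_mem, mem_pow_idealOfVars_iff',
    Nat.lt_succ_iff, Subtype.ext_iff, MvPolynomial.ext_iff, coeff_truncTotalDegree,
    ZeroMemClass.coe_zero, coeff_zero, ite_eq_right_iff]

end MvPolynomial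

section Apolarity

variable {n : ℕ}

theorem apair_comm (q f : MvPolynomial (Fin n) ℂ) : apair q f = apair f q := by
  rw [apair_eq_sum (s := q.support ∪ f.support) Finset.subset_union_left,
    apair_eq_sum (s := q.support ∪ f.support) Finset.subset_union_right]
  exact Finset.sum_congr rfl fun α _ => mul_comm _ _

theorem apair_add_right (q f g : MvPolynomial (Fin n) ℂ) :
    apair q (f + g) = apair q f + apair q g := by
  simp only [apair, coeff_add, mul_add, Finset.sum_add_distrib]

theorem apair_smul_right (c : ℂ) (q f : MvPolynomial (Fin n) ℂ) :
    apair q (c • f) = c * apair q f := by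
  simp only [apair, coeff_smul, smul_eq_mul, Finset.mul_sum, mul_left_comm]

theorem apair_add_left (p q f : MvPolynomial (Fin n) ℂ) :
    apair (p + q) f = apair p f + apair q f := by
  rw [apair_comm, apair_add_right, apair_comm f, apair_comm f]

theorem apair_smul_left (c : ℂ) (q f : MvPolynomial (Fin n) ℂ) :
    apair (c • q) f = c * apair q f := by
  rw [apair_comm, apair_smul_right, apair_comm f]

theorem apair_monomial_one_right (q : MvPolynomial (Fin n) ℂ) (α : Fin n →₀ ℕ) :
    apair q (monomial α 1) = q.coeff α := by
  classical
  rw [apair_eq_sum (Finset.subset_insert α q.support), Finset.sum_eq_single_of_mem α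
    (Finset.mem_insert_self α _) fun β _ hβ => by rw [coeff_monomial, if_neg hβ.symm, mul_zero],
    coeff_monomial, if_pos rfl, mul_one]

theorem apair_truncTotalDegree_right {k : ℕ} {q : MvPolynomial (Fin n) ℂ}
    (hq : q.totalDegree ≤ k) (f : MvPolynomial (Fin n) ℂ) :
    apair q (truncTotalDegree (Fin n) ℂ k f) = apair q f :=
  Finset.sum_congr rfl fun α hα => by
    rw [coeff_truncTotalDegree, if_pos (show α.degree ≤ k from (le_totalDegree hα).trans hq)]

variable (n) in
def apairForm (k : ℕ) : LinearMap.BilinForm ℂ (restrictTotalDegree (Fin n) ℂ k) :=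
  LinearMap.mk₂ ℂ (fun p q => apair (p : MvPolynomial (Fin n) ℂ) q)
    (fun _ _ _ => apair_add_left _ _ _) (fun _ _ _ => apair_smul_left _ _ _)
    (fun _ _ _ => apair_add_right _ _ _) (fun _ _ _ => apair_smul_right _ _ _)

theorem apairForm_apply (k : ℕ) (p q : restrictTotalDegree (Fin n) ℂ k) :
    apairForm n k p q = apair (p : MvPolynomial (Fin n) ℂ) q := rfl

theorem apairForm_nondegenerate (k : ℕ) : (apairForm n k).Nondegenerate := by
  have hrefl : (apairForm n k).IsRefl := fun p q h => by rwa [apairForm_apply, apair_comm]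
  refine hrefl.nondegenerate_iff_separatingLeft.2 fun p hp =>
    Subtype.ext <| MvPolynomial.ext _ _ fun α => ?_
  have hp_deg := (mem_restrictTotalDegree _ _ _).1 p.2
  rcases le_or_gt α.degree k with hα | hα
  · have hmem : monomial α (1 : ℂ) ∈ restrictTotalDegree (Fin n) ℂ k :=
      (mem_restrictTotalDegree _ _ _).2 ((totalDegree_monomial_le α 1).trans hα)
    simpa [apairForm_apply, apair_monomial_one_right] using hp ⟨_, hmem⟩
  · exact coeff_eq_zero_of_totalDegree_le hp_deg hα

theorem truncDual_eq_map_orthogonal (k : ℕ) (I : Ideal (MvPolynomial (Fin n) ℂ)) :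
    truncDual k I = ((apairForm n k).orthogonal
      ((I.restrictScalars ℂ).map (truncTotalDegree (Fin n) ℂ k))).map
        (restrictTotalDegree (Fin n) ℂ k).subtype := by
  ext q
  simp only [Submodule.mem_map, Submodule.coe_subtype, LinearMap.BilinForm.mem_orthogonal_iff,
    forall_exists_index, and_imp, forall_apply_eq_imp_iff₂, Submodule.restrictScalars_mem]
  constructor
  · rintro ⟨hq, hdeg⟩
    refine ⟨⟨q, (mem_restrictTotalDegree _ _ _).2 hdeg⟩, fun f hf => ?_, rfl⟩
    show apair _ q = 0
    rw [apair_comm, apair_truncTotalDegree_right hdeg]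
    exact hq f hf
  · rintro ⟨v, hv, rfl⟩
    have hdeg := (mem_restrictTotalDegree _ _ _).1 v.2
    refine ⟨fun f hf => ?_, hdeg⟩
    have : apair (truncTotalDegree (Fin n) ℂ k f : MvPolynomial (Fin n) ℂ) v = 0 := hv f hf
    rwa [apair_comm, apair_truncTotalDegree_right hdeg] at this

end Apolarity

/-- `dim_ℂ D_0^k[I] = dim_ℂ R/(I + m₀^{k+1})`, and both are finite. -/
theorem truncDual_finrank_eq (n : ℕ) (I : Ideal (MvPolynomial (Fin n) ℂ)) (k : ℕ) :
    FiniteDimensional ℂ (truncDual k I) ∧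
    FiniteDimensional ℂ (MvPolynomial (Fin n) ℂ ⧸
      (I + (Ideal.span (Set.range (X : Fin n → MvPolynomial (Fin n) ℂ))) ^ (k + 1))) ∧
    Module.finrank ℂ (truncDual k I) =
      Module.finrank ℂ (MvPolynomial (Fin n) ℂ ⧸
        (I + (Ideal.span (Set.range (X : Fin n → MvPolynomial (Fin n) ℂ))) ^ (k + 1))) := by
  have hsup : (I + idealOfVars (Fin n) ℂ ^ (k + 1)).restrictScalars ℂ =
      I.restrictScalars ℂ ⊔ LinearMap.ker (truncTotalDegree (Fin n) ℂ k) := by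
    rw [ker_truncTotalDegree, Submodule.add_eq_sup, Submodule.restrictScalars_sup]
  let e := (Submodule.Quotient.restrictScalarsEquiv ℂ _).symm ≪≫ₗ
    Submodule.quotEquivOfEq _ _ hsup ≪≫ₗ
    (truncTotalDegree (Fin n) ℂ k).quotSupKerEquivOfSurjective (truncTotalDegree_surjective k) _
  rw [truncDual_eq_map_orthogonal]
  refine ⟨inferInstance, Module.Finite.equiv e.symm, ?_⟩
  rw [Submodule.finrank_map_subtype_eq, e.finrank_eq,
    LinearMap.BilinForm.finrank_orthogonal_eq_finrank_quotient (apairForm_nondegenerate k)]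

end
end

section
/- Let R = ℂ[x_1,…,x_n], let I ⊆ R be an ideal, let i ∈ {1,…,n} and d ∈ ℕ. Then the contraction by the variable x_i of the truncated dual space of order d+1 lands in the truncated dual space of order d of the colon ideal: x_i∘D_0^{d+1}[I] ⊆ D_0^d[I : ⟨x_i⟩]. -/
open MvPolynomial

noncomputable section

/-! Contraction by `x^β` is adjoint to multiplication by `x^β` under the apolarity pairing, so it
sends functionals vanishing on `I` to functionals vanishing on `I : ⟨x^β⟩`; on coefficients it
shifts exponents down by `β`, so it lowers the total degree by `|β|`. -/

theorem coeff_ite_monomial_tsub {σ R : Type*} [CommSemiring R] [DecidableEq σ] (α β γ : σ →₀ ℕ)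
    [Decidable (β ≤ α)] (a : R) :
    coeff γ (if β ≤ α then monomial (α - β) a else 0) = if α = γ + β then a else 0 := by
  by_cases hβα : β ≤ α
  · have : α - β = γ ↔ α = γ + β := ⟨fun h => by rw [← h, tsub_add_cancel_of_le hβα],
      fun h => by rw [h, add_tsub_cancel_right]⟩
    simp only [if_pos hβα, coeff_monomial, this]
  · have : α ≠ γ + β := fun h => hβα (h ▸ le_add_self)
    simp only [if_neg hβα, if_neg this, coeff_zero]

section

variable {n : ℕ}

theorem coeff_contract (g q : MvPolynomial (Fin n) ℂ) (γ : Fin n →₀ ℕ) :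
    (contract g q).coeff γ = ∑ β ∈ g.support, g.coeff β * q.coeff (γ + β) := by
  classical
  simp only [contract, coeff_sum, coeff_ite_monomial_tsub, Finset.sum_ite_eq']
  refine Finset.sum_congr rfl fun β _ => ?_
  split_ifs with h
  · rfl
  · rw [notMem_support_iff.mp h, mul_zero]

theorem coeff_contract_monomial (β : Fin n →₀ ℕ) (c : ℂ) (q : MvPolynomial (Fin n) ℂ)
    (γ : Fin n →₀ ℕ) :
    (contract (monomial β c) q).coeff γ = c * q.coeff (γ + β) := by
  rw [coeff_contract, Finset.sum_subset support_monomial_subset, Finset.sum_singleton,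
    coeff_monomial, if_pos rfl]
  intro β' _ hβ'
  rw [notMem_support_iff.mp hβ', zero_mul]

theorem apair_contract_monomial (β : Fin n →₀ ℕ) (c : ℂ) (q f : MvPolynomial (Fin n) ℂ) :
    apair (contract (monomial β c) q) f = apair q (monomial β c * f) := by
  classical
  have hsupp : (contract (monomial β c) q).support ⊆
      (q.support.filter (β ≤ ·)).image (· - β) := by
    intro γ hγ
    rw [mem_support_iff, coeff_contract_monomial] at hγ
    exact Finset.mem_image.mpr ⟨γ + β, Finset.mem_filter.mpr
      ⟨mem_support_iff.mpr (right_ne_zero_of_mul hγ), le_add_self⟩, add_tsub_cancel_right γ β⟩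
  have hinj : Set.InjOn (· - β) (q.support.filter (β ≤ ·) : Set (Fin n →₀ ℕ)) :=
    fun α hα α' hα' => (tsub_left_inj (Finset.mem_filter.mp hα).2 (Finset.mem_filter.mp hα').2).mp
  rw [apair_eq_sum hsupp, Finset.sum_image hinj, apair, Finset.sum_filter]
  refine Finset.sum_congr rfl fun α _ => ?_
  rw [coeff_monomial_mul']
  split_ifs with hβα
  · rw [coeff_contract_monomial, tsub_add_cancel_of_le hβα]; ring
  · rw [mul_zero]

theorem contract_monomial_mem_dualSpace {I : Ideal (MvPolynomial (Fin n) ℂ)}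
    {q : MvPolynomial (Fin n) ℂ} (hq : q ∈ dualSpace I) (β : Fin n →₀ ℕ) (c : ℂ) :
    contract (monomial β c) q ∈
      dualSpace (I.colon (Ideal.span {monomial β c} : Ideal (MvPolynomial (Fin n) ℂ))) := by
  intro f hf
  rw [apair_contract_monomial]
  exact hq _ (mul_comm f _ ▸ Ideal.mem_colon_span_singleton.mp hf)

theorem totalDegree_contract_monomial_le (β : Fin n →₀ ℕ) (c : ℂ) (q : MvPolynomial (Fin n) ℂ) :
    (contract (monomial β c) q).totalDegree ≤ q.totalDegree - β.degree := by
  refine Finset.sup_le fun γ hγ => ?_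
  rw [mem_support_iff, coeff_contract_monomial] at hγ
  have := le_totalDegree (mem_support_iff.mpr (right_ne_zero_of_mul hγ))
  have hadd : ((γ + β).sum fun _ e => e) = (γ.sum fun _ e => e) + β.degree :=
    map_add Finsupp.degree γ β
  omega

end

/-- `xᵢ ∘ D_0^{d+1}[I] ⊆ D_0^d[I : ⟨xᵢ⟩]`. -/
theorem contract_X_truncDual_subset (n : ℕ) (I : Ideal (MvPolynomial (Fin n) ℂ))
    (i : Fin n) (d : ℕ) :
    contract (X i) '' (truncDual (d + 1) I : Set (MvPolynomial (Fin n) ℂ)) ⊆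
      (truncDual d (Submodule.colon I
        ((Ideal.span {X i} : Ideal (MvPolynomial (Fin n) ℂ)) : Set (MvPolynomial (Fin n) ℂ))) :
        Set (MvPolynomial (Fin n) ℂ)) := by
  rintro _ ⟨q, ⟨hq, hdeg⟩, rfl⟩
  refine ⟨contract_monomial_mem_dualSpace hq _ _, ?_⟩
  calc (contract (X i) q).totalDegree
      ≤ q.totalDegree - (Finsupp.single i 1).degree := totalDegree_contract_monomial_le _ _ q
    _ ≤ d := by rw [Finsupp.degree_single]; omega
end
end
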